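/- arXiv:2307.00076 — 3 statements merged into one kernel-verified Lean document; each statement's English description precedes it below -/
import Mathlib

section
/- Let R be a semiperfect ring with 1 = e₁ + ⋯ + e_ℓ for orthogonal idempotents e₁, …, e_ℓ such that each e_iRe_i is a local ring, and let A be an R-module whose lattice of submodules is distributive. Then for each i, the set e_iA is a uniserial e_iRe_i-module, i.e., its e_iRe_i-submodules are linearly ordered by inclusion. -/
/-!
Distributivity, applied to `x + y ∈ R(x + y) ⊓ (Rx ⊔ Ry)`, gives for any `x y : A` some
`s : R` with `s • y ∈ Rx` and `(1 - s) • x ∈ Ry`. For `x, y ∈ eA` the corner elements `ese`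
and `e(1 - s)e` sum to `e`, so in the local ring `eRe` one of them is left invertible; then
`y ∈ eRe · x` or `x ∈ eRe · y`. Two `eRe`-submodules are therefore comparable: if
`x ∈ N \ M`, every `y ∈ M` lies in `eRe · x ⊆ N`.
-/

/-- The "corner" set `eRe` of a ring `R` at an idempotent `e`. -/
def corner {R : Type*} [Ring R] (e : R) : Set R := {x : R | e * x * e = x}

/-- A left ideal of the corner ring `eRe` (with identity `e`). -/
def IsCornerLeftIdeal {R : Type*} [Ring R] (e : R) (I : Set R) : Prop :=
  I ⊆ corner e ∧ (0 : R) ∈ I ∧ (∀ x ∈ I, ∀ y ∈ I, x + y ∈ I) ∧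
    ∀ r ∈ corner e, ∀ x ∈ I, r * x ∈ I

/-- `I` is a maximal left ideal of the corner ring `eRe`. -/
def IsCornerMaximalLeftIdeal {R : Type*} [Ring R] (e : R) (I : Set R) : Prop :=
  IsCornerLeftIdeal e I ∧ I ≠ corner e ∧
    ∀ I' : Set R, IsCornerLeftIdeal e I' → I ⊆ I' → I' = I ∨ I' = corner e

/-- The corner ring `eRe` is local: it has a unique maximal left ideal. -/
def IsLocalCorner {R : Type*} [Ring R] (e : R) : Prop :=
  ∃! I : Set R, IsCornerMaximalLeftIdeal e I

/-- An `e_iRe_i`-submodule of `e_iA`: a subset of `A` consisting of elements fixed by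
`e_i`, containing `0`, closed under addition and under the action of `e_i r e_i`. -/
def IsCornerSubmodule {R A : Type*} [Ring R] [AddCommGroup A] [Module R A]
    (e : R) (N : Set A) : Prop :=
  (0 : A) ∈ N ∧ (∀ x ∈ N, e • x = x) ∧ (∀ x ∈ N, ∀ y ∈ N, x + y ∈ N) ∧
    ∀ r : R, ∀ x ∈ N, (e * r * e) • x ∈ N

section Corner

variable {R : Type*} [Ring R] {e : R}

lemma mul_mul_mem_corner (he : IsIdempotentElem e) (r : R) : e * r * e ∈ corner e := by
  change e * (e * r * e) * e = e * r * e
  simp only [mul_assoc, he.eq, he.mul_self_mul]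

lemma mem_corner_self (he : IsIdempotentElem e) : e ∈ corner e := by
  simpa only [mul_one, he.eq] using mul_mul_mem_corner he 1

lemma left_mul_eq_self_of_mem_corner (he : IsIdempotentElem e) {x : R} (hx : x ∈ corner e) :
    e * x = x := by
  rw [← hx, ← mul_assoc, ← mul_assoc, he.eq]

lemma right_mul_eq_self_of_mem_corner (he : IsIdempotentElem e) {x : R} (hx : x ∈ corner e) :
    x * e = x := by
  rw [← hx, he.mul_mul_self]

lemma mul_mem_corner (he : IsIdempotentElem e) {x y : R} (hx : x ∈ corner e)
    (hy : y ∈ corner e) : x * y ∈ corner e := by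
  change e * (x * y) * e = x * y
  rw [← mul_assoc, left_mul_eq_self_of_mem_corner he hx, mul_assoc,
    right_mul_eq_self_of_mem_corner he hy]

def cornerSpanSingleton (e a : R) : Set R := {x | ∃ u ∈ corner e, u * a = x}

lemma isCornerLeftIdeal_cornerSpanSingleton (he : IsIdempotentElem e) {a : R}
    (ha : a ∈ corner e) : IsCornerLeftIdeal e (cornerSpanSingleton e a) := by
  refine ⟨?_, ⟨0, ?_, zero_mul a⟩, ?_, ?_⟩
  · rintro _ ⟨u, hu, rfl⟩
    exact mul_mem_corner he hu ha
  · change e * 0 * e = 0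
    simp
  · rintro _ ⟨u, hu, rfl⟩ _ ⟨v, hv, rfl⟩
    refine ⟨u + v, ?_, add_mul u v a⟩
    change e * (u + v) * e = u + v
    rw [mul_add, add_mul, hu, hv]
  · rintro r hr _ ⟨u, hu, rfl⟩
    exact ⟨r * u, mul_mem_corner he hr hu, mul_assoc r u a⟩

lemma mem_cornerSpanSingleton_self (he : IsIdempotentElem e) {a : R} (ha : a ∈ corner e) :
    a ∈ cornerSpanSingleton e a :=
  ⟨e, mem_corner_self he, left_mul_eq_self_of_mem_corner he ha⟩

lemma IsCornerLeftIdeal.eq_corner_of_mem (he : IsIdempotentElem e) {I : Set R}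
    (hI : IsCornerLeftIdeal e I) (heI : e ∈ I) : I = corner e := by
  refine hI.1.antisymm fun x hx => ?_
  simpa only [right_mul_eq_self_of_mem_corner he hx] using hI.2.2.2 x hx e heI

lemma IsChain.isCornerLeftIdeal_sUnion {c : Set (Set R)} (hc : IsChain (· ⊆ ·) c)
    (hne : c.Nonempty) (hideal : ∀ I ∈ c, IsCornerLeftIdeal e I) :
    IsCornerLeftIdeal e (⋃₀ c) := by
  refine ⟨?_, ?_, ?_, ?_⟩
  · rintro x ⟨I, hI, hx⟩
    exact (hideal I hI).1 hx
  · obtain ⟨I, hI⟩ := hne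
    exact ⟨I, hI, (hideal I hI).2.1⟩
  · rintro x ⟨I, hI, hx⟩ y ⟨J, hJ, hy⟩
    rcases hc.total hI hJ with hIJ | hJI
    · exact ⟨J, hJ, (hideal J hJ).2.2.1 x (hIJ hx) y hy⟩
    · exact ⟨I, hI, (hideal I hI).2.2.1 x hx y (hJI hy)⟩
  · rintro r hr x ⟨I, hI, hx⟩
    exact ⟨I, hI, (hideal I hI).2.2.2 r hr x hx⟩

lemma IsCornerLeftIdeal.exists_le_maximal (he : IsIdempotentElem e) {I : Set R}
    (hI : IsCornerLeftIdeal e I) (heI : e ∉ I) :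
    ∃ M, I ⊆ M ∧ IsCornerMaximalLeftIdeal e M := by
  obtain ⟨M, hIM, hM⟩ := zorn_subset_nonempty {J | IsCornerLeftIdeal e J ∧ e ∉ J}
    (fun c hcS hc hne => ⟨⋃₀ c,
      ⟨hc.isCornerLeftIdeal_sUnion hne fun J hJ => (hcS hJ).1,
        fun ⟨J, hJ, heJ⟩ => (hcS hJ).2 heJ⟩,
      fun _ => Set.subset_sUnion_of_mem⟩) I ⟨hI, heI⟩
  refine ⟨M, hIM, hM.1.1, fun h => hM.1.2 (h ▸ mem_corner_self he), fun J hJ hMJ => ?_⟩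
  by_cases heJ : e ∈ J
  · exact Or.inr (hJ.eq_corner_of_mem he heJ)
  · exact Or.inl ((hM.2 ⟨hJ, heJ⟩ hMJ).antisymm hMJ)

/-- Neither summand being left invertible would put both, hence `e`, in the unique maximal
left ideal. -/
lemma IsLocalCorner.exists_mul_eq_or_exists_mul_eq (he : IsIdempotentElem e)
    (hloc : IsLocalCorner e) {a b : R} (ha : a ∈ corner e) (hb : b ∈ corner e)
    (hab : a + b = e) :
    (∃ u ∈ corner e, u * a = e) ∨ (∃ u ∈ corner e, u * b = e) := by
  by_contra! h
  obtain ⟨J, hJ, hJ_unique⟩ := hloc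
  have mem_of_not_left_invertible {x : R} (hx : x ∈ corner e)
      (hnx : ∀ u ∈ corner e, u * x ≠ e) : x ∈ J := by
    obtain ⟨M, hxM, hM⟩ := (isCornerLeftIdeal_cornerSpanSingleton he hx).exists_le_maximal he
      fun ⟨u, hu, hux⟩ => hnx u hu hux
    exact hJ_unique M hM ▸ hxM (mem_cornerSpanSingleton_self he hx)
  have heJ : e ∈ J := hab ▸ hJ.1.2.2.1 a (mem_of_not_left_invertible ha h.1)
    b (mem_of_not_left_invertible hb h.2)
  exact hJ.2.1 (hJ.1.eq_corner_of_mem he heJ)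

end Corner

section Module

variable {R A : Type*} [Ring R] [AddCommGroup A] [Module R A] {e : R}

lemma IsCornerSubmodule.smul_mem {N : Set A} (hN : IsCornerSubmodule e N) {c : R}
    (hc : c ∈ corner e) {x : A} (hx : x ∈ N) : c • x ∈ N :=
  hc ▸ hN.2.2.2 c x hx

lemma exists_smul_mem_span_and_sub_smul_mem_span
    (hdistrib : ∀ X Y Z : Submodule R A, X ⊓ (Y ⊔ Z) = (X ⊓ Y) ⊔ (X ⊓ Z)) (x y : A) :
    ∃ s : R, s • y ∈ R ∙ x ∧ x - s • x ∈ R ∙ y := by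
  have hxy : x + y ∈ (R ∙ (x + y)) ⊓ ((R ∙ x) ⊔ (R ∙ y)) :=
    ⟨Submodule.mem_span_singleton_self _,
      Submodule.add_mem_sup (Submodule.mem_span_singleton_self x)
        (Submodule.mem_span_singleton_self y)⟩
  rw [hdistrib] at hxy
  obtain ⟨_, ⟨hax, hay⟩, b, ⟨-, hby⟩, hab⟩ := Submodule.mem_sup.1 hxy
  obtain ⟨s, rfl⟩ := Submodule.mem_span_singleton.1 hax
  have hsy : s • y ∈ R ∙ x := by
    simpa only [smul_add, add_sub_cancel_left] using
      sub_mem hay (Submodule.smul_mem _ s (Submodule.mem_span_singleton_self x))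
  refine ⟨s, hsy, ?_⟩
  have hb : x - s • x = b - y + s • y := by
    rw [eq_sub_of_add_eq' hab, smul_add]
    abel
  rw [hb]
  exact add_mem (sub_mem hby (Submodule.mem_span_singleton_self y))
    (Submodule.smul_mem _ s (Submodule.mem_span_singleton_self y))

lemma exists_mem_corner_smul_eq_of_mem_span (he : IsIdempotentElem e) {x z : A}
    (hx : e • x = x) (hz : z ∈ R ∙ x) : ∃ c ∈ corner e, e • z = c • x := by
  obtain ⟨r, rfl⟩ := Submodule.mem_span_singleton.1 hz
  exact ⟨e * r * e, mul_mul_mem_corner he r, by rw [mul_smul, mul_smul, hx]⟩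

lemma exists_mem_corner_eq_smul_of_mul_eq (he : IsIdempotentElem e) {a u c : R} {x y : A}
    (hu : u ∈ corner e) (hua : u * a = e) (hc : c ∈ corner e) (hy : e • y = y)
    (hay : a • y = c • x) : ∃ c' ∈ corner e, y = c' • x :=
  ⟨u * c, mul_mem_corner he hu hc, by rw [mul_smul, ← hay, ← mul_smul, hua, hy]⟩

lemma IsLocalCorner.exists_eq_smul_or_exists_eq_smul (he : IsIdempotentElem e)
    (hloc : IsLocalCorner e)
    (hdistrib : ∀ X Y Z : Submodule R A, X ⊓ (Y ⊔ Z) = (X ⊓ Y) ⊔ (X ⊓ Z))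
    {x y : A} (hx : e • x = x) (hy : e • y = y) :
    (∃ c ∈ corner e, y = c • x) ∨ (∃ c ∈ corner e, x = c • y) := by
  obtain ⟨s, hsy, hsx⟩ := exists_smul_mem_span_and_sub_smul_mem_span hdistrib x y
  obtain ⟨c, hc, hcx⟩ := exists_mem_corner_smul_eq_of_mem_span he hx hsy
  obtain ⟨d, hd, hdy⟩ := exists_mem_corner_smul_eq_of_mem_span he hy hsx
  have hay : (e * s * e) • y = c • x := by rw [mul_smul, mul_smul, hy, hcx]
  have hbx : (e * (1 - s) * e) • x = d • y := by
    rw [mul_smul, mul_smul, hx, sub_smul, one_smul, hdy]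
  have hab : e * s * e + e * (1 - s) * e = e := by
    rw [← add_mul, ← mul_add, add_sub_cancel, mul_one, he.eq]
  rcases hloc.exists_mul_eq_or_exists_mul_eq he (mul_mul_mem_corner he s)
    (mul_mul_mem_corner he (1 - s)) hab with ⟨u, hu, hua⟩ | ⟨u, hu, hub⟩
  · exact Or.inl (exists_mem_corner_eq_smul_of_mul_eq he hu hua hc hy hay)
  · exact Or.inr (exists_mem_corner_eq_smul_of_mul_eq he hu hub hd hx hbx)

end Module

theorem corner_uniserial_of_distributive_general {R A : Type*} [Ring R] [AddCommGroup A]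
    [Module R A] (ℓ : ℕ) (e : Fin ℓ → R)
    (hidem : ∀ i, e i * e i = e i)
    (hlocal : ∀ i, IsLocalCorner (e i))
    (hdistrib : ∀ X Y Z : Submodule R A, X ⊓ (Y ⊔ Z) = (X ⊓ Y) ⊔ (X ⊓ Z)) :
    ∀ i, ∀ N M : Set A, IsCornerSubmodule (e i) N → IsCornerSubmodule (e i) M →
      N ⊆ M ∨ M ⊆ N := by
  intro i N M hN hM
  refine or_iff_not_imp_left.2 fun hNM y hy => ?_
  obtain ⟨x, hxN, hxM⟩ := Set.not_subset.1 hNM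
  rcases (hlocal i).exists_eq_smul_or_exists_eq_smul (hidem i) hdistrib (hN.2.1 x hxN)
    (hM.2.1 y hy) with ⟨c, hc, rfl⟩ | ⟨c, hc, rfl⟩
  · exact hN.smul_mem hc hxN
  · exact absurd (hM.smul_mem hc hy) hxM

/-- Let `R` be semiperfect, with `1 = e₁ + ⋯ + e_ℓ` for orthogonal idempotents whose
corner rings `e_iRe_i` are local, and let `A` be a distributive `R`-module. Then each
`e_iA` is a uniserial `e_iRe_i`-module: its submodules are linearly ordered by
inclusion. -/
theorem corner_uniserial_of_distributive {R A : Type*} [Ring R] [AddCommGroup A]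
    [Module R A] (ℓ : ℕ) (e : Fin ℓ → R)
    (hidem : ∀ i, e i * e i = e i)
    (horth : ∀ i j, i ≠ j → e i * e j = 0)
    (hsum : ∑ i, e i = 1)
    (hlocal : ∀ i, IsLocalCorner (e i))
    (hdistrib : ∀ X Y Z : Submodule R A, X ⊓ (Y ⊔ Z) = (X ⊓ Y) ⊔ (X ⊓ Z)) :
    ∀ i, ∀ N M : Set A, IsCornerSubmodule (e i) N → IsCornerSubmodule (e i) M →
      N ⊆ M ∨ M ⊆ N :=
  corner_uniserial_of_distributive_general ℓ e hidem hlocal hdistrib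
end

section
/- Let R be a finite local ring whose Jacobson radical J is its unique maximal left ideal, let A be a distributive R-module, and suppose for x, y ∈ A that the cyclic submodules Rx and Ry are incomparable under inclusion. Then the module (Rx+Ry)/(Jx+Jy) is isomorphic to (R/J)², which is not a distributive module; hence in a distributive module over a local ring, the set of cyclic submodules {Rx : x ∈ A} is linearly ordered by inclusion, i.e., A is uniserial. -/
/-!
If `Rx` and `Ry` are incomparable, then `ax + by = 0` forces `a, b ∈ J`: otherwise `a` (say) has a
left inverse, which puts `x` into `Ry`. So the kernel of `(a, b) ↦ ax + by` lies in `J × J`, and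
`(Rx + Ry)/(Jx + Jy) ≅ (R × R)/(J × J) ≅ (R/J)²`. For any module `M ≠ 0`, the diagonal copy of
`Rm` in `M²` meets both axes trivially but lies in their sum, so `M²` is not distributive. Since
distributivity of the submodule lattice passes to submodules and to quotients (the lattice of
`N` or of `M ⧸ p` embeds into that of `M`), a distributive module cannot contain incomparable
cyclic submodules.
-/

open Submodule LinearMap

def IsDistrib (α : Type*) [Lattice α] : Prop :=
  ∀ a b c : α, a ⊓ (b ⊔ c) = a ⊓ b ⊔ a ⊓ c

theorem IsDistrib.of_injective {α β : Type*} [Lattice α] [Lattice β] (f : α → β)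
    (hf : Function.Injective f) (map_inf : ∀ a b, f (a ⊓ b) = f a ⊓ f b)
    (map_sup : ∀ a b, f (a ⊔ b) = f a ⊔ f b) (h : IsDistrib β) : IsDistrib α :=
  fun a b c => hf <| by simpa only [map_inf, map_sup] using h (f a) (f b) (f c)

section Module

variable {R M N : Type*} [Ring R] [AddCommGroup M] [Module R M] [AddCommGroup N] [Module R N]

theorem Submodule.comap_sup_of_surjective {f : M →ₗ[R] N} (hf : Function.Surjective f)
    (p q : Submodule R N) : comap f (p ⊔ q) = comap f p ⊔ comap f q := by
  conv_lhs => rw [← map_comap_eq_of_surjective hf p, ← map_comap_eq_of_surjective hf q, ← map_sup]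
  exact comap_map_eq_self ((ker_le_comap f).trans le_sup_left)

theorem IsDistrib.submodule (h : IsDistrib (Submodule R M)) (p : Submodule R M) :
    IsDistrib (Submodule R p) :=
  h.of_injective (map p.subtype) (map_injective_of_injective p.injective_subtype)
    (fun _ _ => map_inf _ p.injective_subtype) (fun _ _ => map_sup _ _ _)

theorem IsDistrib.of_surjective (h : IsDistrib (Submodule R M)) {f : M →ₗ[R] N}
    (hf : Function.Surjective f) : IsDistrib (Submodule R N) :=
  h.of_injective (comap f) (comap_injective_of_surjective hf) (fun _ _ => comap_inf _ _ _)
    (comap_sup_of_surjective hf)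

theorem span_singleton_inf_ker_eq_bot (f : M →ₗ[R] N) {v : M}
    (h : ∀ r : R, r • f v = 0 → r • v = 0) : span R {v} ⊓ ker f = ⊥ := by
  rw [eq_bot_iff]
  rintro _ ⟨hv, hker⟩
  obtain ⟨r, rfl⟩ := mem_span_singleton.mp hv
  exact (mem_bot R).mpr (h r (by simpa using hker))

theorem not_isDistrib_submodule_prod_self {m : M} (hm : m ≠ 0) :
    ¬ IsDistrib (Submodule R (M × M)) := by
  intro h
  have hdiag := h (span R {(m, m)}) (range (inl R M M)) (range (inr R M M))
  have hcoord : ∀ r : R, r • m = 0 → r • (m, m) = 0 := fun r hr => by simp [hr]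
  rw [sup_range_inl_inr, inf_top_eq, ← ker_snd, ← ker_fst,
    span_singleton_inf_ker_eq_bot _ hcoord, span_singleton_inf_ker_eq_bot _ hcoord, sup_bot_eq,
    span_singleton_eq_bot] at hdiag
  exact hm (congrArg Prod.fst hdiag)

noncomputable def quotientComapSubtypeEquiv {P : Type*} [AddCommGroup P] [Module R P]
    (φ : P →ₗ[R] M) {S : Submodule R M} (hφ : range φ = S) (W : Submodule R M) :
    (S ⧸ W.comap S.subtype) ≃ₗ[R] P ⧸ W.comap φ :=
  let ψ := φ.codRestrict S fun p => hφ ▸ mem_range_self φ p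
  have hψ : Function.Surjective ψ := by
    rintro ⟨v, hv⟩
    obtain ⟨p, rfl⟩ := mem_range.mp (hφ ▸ hv)
    exact ⟨p, rfl⟩
  have hker : ker ((W.comap S.subtype).mkQ ∘ₗ ψ) = W.comap φ := by
    rw [ker_comp, ker_mkQ, ← comap_comp, subtype_comp_codRestrict]
  (quotEquivOfEq _ _ hker.symm).trans
    (((W.comap S.subtype).mkQ ∘ₗ ψ).quotKerEquivOfSurjective
      ((W.comap S.subtype).mkQ_surjective.comp hψ)) |>.symm

noncomputable def quotientProdEquiv (p : Submodule R M) (q : Submodule R N) :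
    ((M × N) ⧸ p.prod q) ≃ₗ[R] (M ⧸ p) × (N ⧸ q) :=
  (quotEquivOfEq _ _ (by rw [ker_prodMap, ker_mkQ, ker_mkQ])).trans
    ((p.mkQ.prodMap q.mkQ).quotKerEquivOfSurjective
      (p.mkQ_surjective.prodMap q.mkQ_surjective))

end Module

section LocalRing

variable {R A : Type*} [Ring R] [AddCommGroup A] [Module R A] {J : Ideal R}
  (hJmax : ∀ I : Ideal R, I ≠ ⊤ → I ≤ J)
include hJmax

/-- Outside `J` every element has a left inverse, since `R r` is not contained in `J`. -/
theorem mem_of_smul_mem_of_notMem {N : Submodule R A} {r : R} {x : A} (hr : r ∉ J)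
    (h : r • x ∈ N) : x ∈ N := by
  obtain ⟨s, hs⟩ : ∃ s : R, s * r = 1 := by
    by_contra! hno
    refine hr (hJmax _ (fun htop => ?_) (Ideal.mem_span_singleton_self r))
    obtain ⟨s, hs⟩ := mem_span_singleton.mp (htop ▸ mem_top : (1 : R) ∈ Ideal.span {r})
    exact hno s (smul_eq_mul s r ▸ hs)
  simpa [smul_smul, hs] using N.smul_mem s h

theorem ker_coprod_toSpanSingleton_le_prod {x y : A} (hxy : ¬ span R {x} ≤ span R {y})
    (hyx : ¬ span R {y} ≤ span R {x}) :
    ker ((toSpanSingleton R A x).coprod (toSpanSingleton R A y)) ≤ Submodule.prod J J := by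
  rintro ⟨a, b⟩ hker
  have hax : a • x = -(b • y) := eq_neg_of_add_eq_zero_left hker
  have hby : b • y = -(a • x) := eq_neg_of_add_eq_zero_right hker
  rw [span_singleton_le_iff_mem] at hxy hyx
  refine ⟨by_contra fun ha => hxy (mem_of_smul_mem_of_notMem hJmax ha ?_),
    by_contra fun hb => hyx (mem_of_smul_mem_of_notMem hJmax hb ?_)⟩
  · exact hax ▸ neg_mem (smul_mem _ b (mem_span_singleton_self y))
  · exact hby ▸ neg_mem (smul_mem _ a (mem_span_singleton_self x))

theorem nonempty_subquotient_linearEquiv_prod {x y : A} (hxy : ¬ span R {x} ≤ span R {y})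
    (hyx : ¬ span R {y} ≤ span R {x}) :
    Nonempty
      (((span R {x} ⊔ span R {y} : Submodule R A) ⧸
          (map (toSpanSingleton R A x) J ⊔ map (toSpanSingleton R A y) J).comap
            (span R {x} ⊔ span R {y} : Submodule R A).subtype)
        ≃ₗ[R] ((R ⧸ J) × (R ⧸ J))) := by
  set φ := (toSpanSingleton R A x).coprod (toSpanSingleton R A y)
  have hrange : range φ = span R {x} ⊔ span R {y} := by
    rw [range_coprod, range_toSpanSingleton, range_toSpanSingleton]
  have hcomap : (map (toSpanSingleton R A x) J ⊔ map (toSpanSingleton R A y) J).comap φ =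
      Submodule.prod J J := by
    rw [← map_coprod_prod, comap_map_eq_self (ker_coprod_toSpanSingleton_le_prod hJmax hxy hyx)]
  exact ⟨(quotientComapSubtypeEquiv φ hrange _).trans
    ((quotEquivOfEq _ _ hcomap).trans (quotientProdEquiv J J))⟩

end LocalRing

theorem cyclic_chain_of_distributive_local_general {R A : Type*} [Ring R]
    [AddCommGroup A] [Module R A]
    (J : Ideal R) (hJne : J ≠ ⊤) (hJmax : ∀ I : Ideal R, I ≠ ⊤ → I ≤ J) :
    (∀ x y : A,
      ¬ Submodule.span R {x} ≤ Submodule.span R {y} →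
      ¬ Submodule.span R {y} ≤ Submodule.span R {x} →
      Nonempty
        (((Submodule.span R {x} ⊔ Submodule.span R {y} : Submodule R A) ⧸
            (Submodule.map (LinearMap.toSpanSingleton R A x) J ⊔
              Submodule.map (LinearMap.toSpanSingleton R A y) J).comap
              (Submodule.span R {x} ⊔ Submodule.span R {y} : Submodule R A).subtype)
          ≃ₗ[R] ((R ⧸ J) × (R ⧸ J)))) ∧
    (¬ ∀ X Y Z : Submodule R ((R ⧸ J) × (R ⧸ J)),
        X ⊓ (Y ⊔ Z) = (X ⊓ Y) ⊔ (X ⊓ Z)) ∧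
    ((∀ X Y Z : Submodule R A, X ⊓ (Y ⊔ Z) = (X ⊓ Y) ⊔ (X ⊓ Z)) →
      ∀ x y : A, Submodule.span R {x} ≤ Submodule.span R {y} ∨
        Submodule.span R {y} ≤ Submodule.span R {x}) := by
  have hne : (Submodule.Quotient.mk 1 : R ⧸ J) ≠ 0 := fun h =>
    hJne (J.eq_top_iff_one.mpr ((Submodule.Quotient.mk_eq_zero J).mp h))
  have hnotDistrib : ¬ IsDistrib (Submodule R ((R ⧸ J) × (R ⧸ J))) :=
    not_isDistrib_submodule_prod_self hne
  refine ⟨fun x y => nonempty_subquotient_linearEquiv_prod hJmax, hnotDistrib, fun h x y => ?_⟩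
  by_contra! ⟨hxy, hyx⟩
  obtain ⟨e⟩ := nonempty_subquotient_linearEquiv_prod hJmax hxy hyx
  exact hnotDistrib (((IsDistrib.submodule h _).of_surjective (mkQ_surjective _)).of_surjective
    e.surjective)

/-- Let `R` be a finite local ring (with unique maximal left ideal `J`) and let `A` be
an `R`-module. If the cyclic submodules `Rx` and `Ry` are incomparable, then
`(Rx+Ry)/(Jx+Jy)` is isomorphic to `(R/J)²`, whose submodule lattice is not
distributive; hence if `A` is a distributive module, the cyclic submodules
`{Rx : x ∈ A}` are linearly ordered by inclusion, i.e. `A` is uniserial. -/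
theorem cyclic_chain_of_distributive_local {R A : Type*} [Ring R] [Fintype R]
    [Nontrivial R] [AddCommGroup A] [Module R A]
    (J : Ideal R) (hJne : J ≠ ⊤) (hJmax : ∀ I : Ideal R, I ≠ ⊤ → I ≤ J) :
    (∀ x y : A,
      ¬ Submodule.span R {x} ≤ Submodule.span R {y} →
      ¬ Submodule.span R {y} ≤ Submodule.span R {x} →
      Nonempty
        (((Submodule.span R {x} ⊔ Submodule.span R {y} : Submodule R A) ⧸
            (Submodule.map (LinearMap.toSpanSingleton R A x) J ⊔
              Submodule.map (LinearMap.toSpanSingleton R A y) J).comap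
              (Submodule.span R {x} ⊔ Submodule.span R {y} : Submodule R A).subtype)
          ≃ₗ[R] ((R ⧸ J) × (R ⧸ J)))) ∧
    (¬ ∀ X Y Z : Submodule R ((R ⧸ J) × (R ⧸ J)),
        X ⊓ (Y ⊔ Z) = (X ⊓ Y) ⊔ (X ⊓ Z)) ∧
    ((∀ X Y Z : Submodule R A, X ⊓ (Y ⊔ Z) = (X ⊓ Y) ⊔ (X ⊓ Z)) →
      ∀ x y : A, Submodule.span R {x} ≤ Submodule.span R {y} ∨
        Submodule.span R {y} ≤ Submodule.span R {x}) :=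
  cyclic_chain_of_distributive_local_general J hJne hJmax
end

section
/- Let A be a module with submodule B, and let C be a clonoid from A/B to B containing the constant-0 function, where for f : A^k → A in Clo(A) (all term functions being linear/module term operations) and g : (A/B)^k → B, define f + g' : A^k → A by x ↦ f(x) + g(x + B^k). Then Clo(A) + C := { f + g' : f ∈ Clo(A)^(k), g ∈ C^(k), k ∈ ℕ } is a clone on A containing Clo(A), i.e., it contains all projections and is closed under composition. -/
/-!
A member of `Clo(A) + C` is a linear part plus a correction that takes values in `B` and only
depends on the classes modulo `B`. Substituting such functions into one another, the
corrections vanish modulo `B`, so the outer correction only sees the linear parts of the inner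
functions, i.e. it is composed with term functions of `A/B`; the remaining corrections are
combined linearly inside `B`. Both operations keep us inside the clonoid `C`.
-/

/-- A `k`-ary term function of a module: a linear combination of the variables. -/
def IsTermFun (R A : Type*) [Semiring R] [AddCommMonoid A] [Module R A]
    (k : ℕ) (t : (Fin k → A) → A) : Prop :=
  ∃ c : Fin k → R, ∀ x : Fin k → A, t x = ∑ i, c i • x i

/-- A clonoid from the module `A` (over `R`) to the module `B` (over `S`). -/
def IsClonoid (R A S B : Type*) [Semiring R] [AddCommMonoid A] [Module R A]
    [Semiring S] [AddCommMonoid B] [Module S B]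
    (C : ∀ k : ℕ, Set ((Fin k → A) → B)) : Prop :=
  (∀ (k m : ℕ) (f : (Fin k → A) → B) (s : Fin k → (Fin m → A) → A),
      f ∈ C k → (∀ i, IsTermFun R A m (s i)) →
      (fun x => f (fun i => s i x)) ∈ C m) ∧
  (∀ (k n : ℕ) (t : (Fin n → B) → B) (g : Fin n → (Fin k → A) → B),
      IsTermFun S B n t → (∀ i, g i ∈ C k) →
      (fun x => t (fun i => g i x)) ∈ C k)

open Finset

theorem IsTermFun.proj (R : Type*) {A : Type*} [Semiring R] [AddCommMonoid A] [Module R A]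
    {k : ℕ} (i : Fin k) : IsTermFun R A k (fun x => x i) :=
  ⟨Pi.single i 1, fun x => by simp [Pi.single_apply, ite_smul]⟩

theorem sum_smul_sum_smul {R M : Type*} [Semiring R] [AddCommMonoid M] [Module R M]
    {n k : ℕ} (c : Fin n → R) (d : Fin n → Fin k → R) (x : Fin k → M) :
    ∑ j, c j • ∑ i, d j i • x i = ∑ i, (∑ j, c j * d j i) • x i := by
  simp only [smul_sum, smul_smul, sum_smul]
  exact sum_comm

theorem Submodule.Quotient.mk_sum_smul_add_coe {R A : Type*} [Ring R] [AddCommGroup A]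
    [Module R A] {B : Submodule R A} {k : ℕ} (d : Fin k → R) (x : Fin k → A) (b : B) :
    (mk (∑ i, d i • x i + (b : A)) : A ⧸ B) = ∑ i, d i • mk (x i) := by
  rw [mk_add, (mk_eq_zero B).2 b.2, add_zero, ← mkQ_apply, map_sum]
  simp only [map_smul, mkQ_apply]

namespace IsClonoid

variable {R A S B : Type*} [Semiring R] [AddCommMonoid A] [Module R A]
    [Semiring S] [AddCommMonoid B] [Module S B] {C : ∀ k : ℕ, Set ((Fin k → A) → B)}

theorem comp_sum_smul_mem (hC : IsClonoid R A S B C) {n k : ℕ} {g : (Fin n → A) → B}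
    (hg : g ∈ C n) (d : Fin n → Fin k → R) :
    (fun y => g (fun j => ∑ i, d j i • y i)) ∈ C k :=
  hC.1 n k g _ hg fun j => ⟨d j, fun _ => rfl⟩

theorem sum_smul_mem (hC : IsClonoid R A S B C) {n k : ℕ} (c : Fin n → S)
    {g : Fin n → (Fin k → A) → B} (hg : ∀ j, g j ∈ C k) :
    (fun y => ∑ j, c j • g j y) ∈ C k :=
  hC.2 k n _ g ⟨c, fun _ => rfl⟩ hg

theorem add_mem (hC : IsClonoid R A S B C) {k : ℕ} {f g : (Fin k → A) → B}
    (hf : f ∈ C k) (hg : g ∈ C k) : (fun y => f y + g y) ∈ C k := by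
  have := hC.sum_smul_mem (fun _ => (1 : S)) (g := ![f, g]) (Fin.forall_fin_two.2 ⟨hf, hg⟩)
  simpa [Fin.sum_univ_two] using this

end IsClonoid

section PlusClonoid

variable {R A : Type*} [Ring R] [AddCommGroup A] [Module R A] {B : Submodule R A}
    {C : ∀ k : ℕ, Set ((Fin k → A ⧸ B) → B)}

variable (B C) in
/-- The set `Clo(A) + C` of `k`-ary operations on `A`. -/
def plusClonoid (k : ℕ) : Set ((Fin k → A) → A) :=
  {h | ∃ c : Fin k → R, ∃ g ∈ C k, ∀ x : Fin k → A,
    h x = ∑ i, c i • x i + (g (fun i => Submodule.Quotient.mk (x i)) : A)}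

theorem IsTermFun.mem_plusClonoid (h0 : ∀ k, (fun _ : Fin k → A ⧸ B => (0 : B)) ∈ C k)
    {k : ℕ} {t : (Fin k → A) → A} (ht : IsTermFun R A k t) : t ∈ plusClonoid B C k :=
  let ⟨c, hc⟩ := ht
  ⟨c, _, h0 k, fun x => by simp [hc x]⟩

theorem comp_mem_plusClonoid (hC : IsClonoid R (A ⧸ B) R B C) {n k : ℕ}
    {h : (Fin n → A) → A} {h' : Fin n → (Fin k → A) → A}
    (hh : h ∈ plusClonoid B C n) (hh' : ∀ j, h' j ∈ plusClonoid B C k) :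
    (fun x => h (fun j => h' j x)) ∈ plusClonoid B C k := by
  obtain ⟨c, g, hg, hh⟩ := hh
  choose d g' hg' hh' using hh'
  refine ⟨fun i => ∑ j, c j * d j i,
    fun y => ∑ j, c j • g' j y + g (fun j => ∑ i, d j i • y i),
    hC.add_mem (hC.sum_smul_mem c hg') (hC.comp_sum_smul_mem hg d), fun x => ?_⟩
  set x' := fun i => (Submodule.Quotient.mk (x i) : A ⧸ B)
  calc h (fun j => h' j x)
      = ∑ j, c j • (∑ i, d j i • x i + (g' j x' : A))
          + (g (fun j => ∑ i, d j i • x' i) : A) := by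
        simp only [hh, hh', Submodule.Quotient.mk_sum_smul_add_coe, x']
    _ = ∑ i, (∑ j, c j * d j i) • x i
          + ((∑ j, c j • g' j x' + g (fun j => ∑ i, d j i • x' i) : B) : A) := by
        simp only [smul_add, sum_add_distrib, sum_smul_sum_smul, Submodule.coe_add,
          Submodule.coe_sum, Submodule.coe_smul, add_assoc]

end PlusClonoid

/-- Let `A` be an `R`-module with submodule `B`, and let `C` be a clonoid from `A/B`
to `B` containing the constant-`0` functions. Then
`Clo(A) + C = { x ↦ Σᵢ cᵢ•xᵢ + g(x + Bᵏ) : c ∈ Rᵏ, g ∈ C⁽ᵏ⁾ }` is a clone on `A`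
containing `Clo(A)`: it contains all projections and all term functions of `A`, and
it is closed under composition. -/
theorem cloA_plus_clonoid_is_clone {R A : Type*} [Ring R] [AddCommGroup A]
    [Module R A] (B : Submodule R A)
    (C : ∀ k : ℕ, Set ((Fin k → A ⧸ B) → B))
    (hC : IsClonoid R (A ⧸ B) R B C)
    (h0 : ∀ k, (fun _ : Fin k → A ⧸ B => (0 : B)) ∈ C k)
    (D : ∀ k : ℕ, Set ((Fin k → A) → A))
    (hD : ∀ k, D k = {h | ∃ c : Fin k → R, ∃ g ∈ C k, ∀ x : Fin k → A,
      h x = ∑ i, c i • x i + (g (fun i => Submodule.Quotient.mk (x i)) : A)}) :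
    (∀ (k : ℕ) (i : Fin k), (fun x : Fin k → A => x i) ∈ D k) ∧
    (∀ (k : ℕ) (t : (Fin k → A) → A), IsTermFun R A k t → t ∈ D k) ∧
    (∀ (n k : ℕ) (h : (Fin n → A) → A) (h' : Fin n → (Fin k → A) → A),
      h ∈ D n → (∀ i, h' i ∈ D k) →
      (fun x => h (fun i => h' i x)) ∈ D k) := by
  obtain rfl : D = plusClonoid B C := funext hD
  exact ⟨fun _ i => (IsTermFun.proj R i).mem_plusClonoid h0,
    fun _ _ ht => ht.mem_plusClonoid h0,
    fun _ _ _ _ hh hh' => comp_mem_plusClonoid hC hh hh'⟩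
end
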